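/- Let α and β be types and p : α → β → Prop a decidable join predicate. For bag relations f : α →₀ ℕ and g : β →₀ ℕ, define the left outer join lo(f, g) : α × Option β →₀ ℕ by lo(f, g)(a, some b) = f a * g b if p a b (else 0), and lo(f, g)(a, none) = f a if no b in the support of g satisfies p a b (else 0). Then the left outer join is additive in its left argument: for all f, Δf : α →₀ ℕ and g : β →₀ ℕ, lo(f + Δf, g) = lo(f, g) + lo(Δf, g). -/
import Mathlib


/-- Left outer join of two bag relations with natural-number multiplicities:
`lo f g (a, some b) = f a * g b` when `p a b` holds (else `0`), and
`lo f g (a, none) = f a` when no `b` in the support of `g` satisfies `p a b`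
(else `0`). -/
noncomputable def leftOuterJoin {α β : Type*} (p : α → β → Prop) [∀ a b, Decidable (p a b)]
    (f : α →₀ ℕ) (g : β →₀ ℕ) : α × Option β →₀ ℕ :=
  letI : DecidableEq (Option β) := Classical.decEq _
  Finsupp.onFinset (f.support ×ˢ insert none (g.support.image some))
    (fun x =>
      match x with
      | (a, some b) => if p a b then f a * g b else 0
      | (a, none) => if ∃ b ∈ g.support, p a b then 0 else f a)
    (fun x hx => by
      rw [Finset.mem_product]
      obtain ⟨a, b⟩ := x
      cases b with
      | none =>
        refine ⟨?_, Finset.mem_insert_self _ _⟩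
        simp only [Finsupp.mem_support_iff]
        intro h
        apply hx
        simp [h]
      | some b =>
        constructor
        · simp only [Finsupp.mem_support_iff]
          intro h
          apply hx
          simp [h]
        · apply Finset.mem_insert_of_mem
          rw [Finset.mem_image]
          refine ⟨b, ?_, rfl⟩
          simp only [Finsupp.mem_support_iff]
          intro h
          apply hx
          simp [h])

/-- The TVR-generating (delta) rule for left outer join under an insertion-only
delta on the left input: the left outer join is additive in its left argument. -/
theorem leftOuterJoin_add_left {α β : Type*} (p : α → β → Prop)
    [∀ a b, Decidable (p a b)] (f Δf : α →₀ ℕ) (g : β →₀ ℕ) :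
    leftOuterJoin p (f + Δf) g = leftOuterJoin p f g + leftOuterJoin p Δf g := by
  ext ⟨a, b⟩
  simp only [leftOuterJoin, Finsupp.onFinset_apply, Finsupp.add_apply]
  cases b with
  | none => split <;> split <;> simp [add_mul]
  | some b => split <;> split <;> simp [add_mul]
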